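/- Let X be a Dedekind complete Riesz space with weak order unit e, let T be a conditional expectation operator on X with Te = e, and assume X is T-universally complete. Let (x_n) be a sequence in X and x ∈ X. If for every real ε > 0 the partial sums ∑_{n=1}^{N} T P_{(|x_n − x| − εe)^+} e, N ≥ 1, are order bounded in X, then (x_n) uo-converges to x, i.e. for every u ∈ X with u ≥ 0 the sequence (|x_n − x| ∧ u) order converges to 0. -/

import Mathlib

/-!
Fix `ε > 0`, put `w n = (|f n - x| - ε • e)⁺` and `p n = P_{w n} e`. By `T`-universal completeness
the series `∑ p n` has a sum `s`, so the tails `s - ∑_{k<N} p k` decrease to `0` and dominate every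
`p n` with `n ≥ N` (a Borel–Cantelli argument). Cutting at height `M • e` gives
`|f n - x| ⊓ u ≤ ε • e ⊓ u + (u - M • e)⁺ + M • p n`, so every lower bound `b` of the tail suprema
of `|f n - x| ⊓ u` satisfies `b ≤ ε • e ⊓ u + (u - M • e)⁺` for all `M`. Since `e` is a weak unit,
`(u - M • e)⁺ ↓ 0`; hence `b ≤ ε • e` for every `ε > 0`, and `b ≤ 0` because a Dedekind complete
space is Archimedean.
-/

/-- A net `x : A → X` order converges to `l` if there is a (nonempty, upward directed)
net `y : B → X` decreasing to `0` (i.e. antitone with infimum `0`) such that for every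
index `b` the net `x` eventually satisfies `|x a - l| ≤ y b`. -/
def OrderConvergesTo {X : Type u} [Lattice X] [AddCommGroup X]
    {A : Type v} [Preorder A] (x : A → X) (l : X) : Prop :=
  ∃ (B : Type u) (r : B → B → Prop) (y : B → X),
    Nonempty B ∧
    (∀ b, r b b) ∧
    (∀ b₁ b₂ b₃, r b₁ b₂ → r b₂ b₃ → r b₁ b₃) ∧
    (∀ b₁ b₂, ∃ b₃, r b₁ b₃ ∧ r b₂ b₃) ∧
    (∀ b₁ b₂, r b₁ b₂ → y b₂ ≤ y b₁) ∧
    IsGLB (Set.range y) 0 ∧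
    ∀ b, ∃ a₀ : A, ∀ a : A, a₀ ≤ a → |x a - l| ≤ y b

/-- The band projection associated to a positive element `w`, applied to a positive
element `z` : `P_w z = sup_{n ≥ 1} (z ⊓ n • w)`. -/
noncomputable def bandProjApply {X : Type u} [ConditionallyCompleteLattice X]
    [AddCommGroup X] (w z : X) : X :=
  ⨆ n : ℕ, z ⊓ ((n + 1) • w)

open Set

section LatticeOrderedGroup

variable {X : Type*} [Lattice X] [AddCommGroup X]

theorem orderConvergesTo_of_antitone {g t : ℕ → X} {l : X} (ht : Antitone t)
    (ht0 : IsGLB (range t) 0) (hg : ∀ N n, N ≤ n → |g n - l| ≤ t N) :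
    OrderConvergesTo g l :=
  ⟨ULift ℕ, fun i j => i.down ≤ j.down, fun i => t i.down, ⟨⟨0⟩⟩, fun _ => le_rfl,
    fun _ _ _ => le_trans, fun i j => ⟨⟨max i.down j.down⟩, le_max_left _ _, le_max_right _ _⟩,
    fun _ _ h => ht h, ULift.down_surjective.range_comp t ▸ ht0, fun i => ⟨i.down, hg i.down⟩⟩

variable [CovariantClass X X (· + ·) (· ≤ ·)]

theorem posPart_sub_eq_sub_inf (a b : X) : (a - b)⁺ = a - a ⊓ b := by
  rw [inf_eq_sub_posPart_sub, sub_sub_cancel]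

theorem add_inf_le_inf_add_inf {v w u : X} (hv : 0 ≤ v) (hw : 0 ≤ w) (hu : 0 ≤ u) :
    (v + w) ⊓ u ≤ v ⊓ u + w ⊓ u := by
  rw [add_inf, inf_add, inf_add]
  exact le_inf (le_inf inf_le_left (inf_le_right.trans (le_add_of_nonneg_right hw)))
    (le_inf (inf_le_right.trans (le_add_of_nonneg_left hv))
      (inf_le_right.trans (le_add_of_nonneg_right hu)))

theorem inf_nsmul_le_nsmul_inf {a e : X} (ha : 0 ≤ a) (he : 0 ≤ e) :
    ∀ n : ℕ, a ⊓ n • e ≤ n • (a ⊓ e)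
  | 0 => by simp [ha]
  | n + 1 => by
    rw [succ_nsmul, succ_nsmul, inf_comm]
    calc (n • e + e) ⊓ a ≤ n • e ⊓ a + e ⊓ a :=
          add_inf_le_inf_add_inf (nsmul_nonneg he n) he ha
      _ ≤ n • (a ⊓ e) + a ⊓ e := by
          rw [inf_comm _ a, inf_comm e]
          exact add_le_add_left (inf_nsmul_le_nsmul_inf ha he n) _

theorem inf_le_add_posPart_sub_nsmul_add_nsmul_inf {a w c u e : X} (hw : 0 ≤ w) (hc : 0 ≤ c)
    (hu : 0 ≤ u) (he : 0 ≤ e) (ha : a ≤ w + c) (M : ℕ) :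
    a ⊓ u ≤ c ⊓ u + (u - M • e)⁺ + M • (w ⊓ e) := by
  have hsplit : w ⊓ u = (w ⊓ u) ⊓ M • e + (w ⊓ u - M • e)⁺ := by
    rw [posPart_sub_eq_sub_inf, add_sub_cancel]
  have hlow : (w ⊓ u) ⊓ M • e ≤ M • (w ⊓ e) :=
    (inf_le_inf_right _ inf_le_left).trans (inf_nsmul_le_nsmul_inf hw he M)
  have hhigh : (w ⊓ u - M • e)⁺ ≤ (u - M • e)⁺ := posPart_mono (sub_le_sub_right inf_le_right _)
  calc a ⊓ u ≤ (w + c) ⊓ u := inf_le_inf_right u ha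
    _ ≤ w ⊓ u + c ⊓ u := add_inf_le_inf_add_inf hw hc hu
    _ ≤ M • (w ⊓ e) + (u - M • e)⁺ + c ⊓ u := by
        rw [hsplit]; exact add_le_add_left (add_le_add hlow hhigh) _
    _ = c ⊓ u + (u - M • e)⁺ + M • (w ⊓ e) := by abel

theorem nonpos_of_forall_le_sub_of_isLUB {ι : Type*} {S : ι → X} {s b : X}
    (hs : IsLUB (range S) s) (h : ∀ i, b ≤ s - S i) : b ≤ 0 := by
  have : s ≤ s - b := hs.2 (forall_mem_range.2 fun i => le_sub_comm.mp (h i))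
  simpa using this

theorem le_sub_sum_range_of_isLUB {p : ℕ → X} (hp : ∀ n, 0 ≤ p n) {s : X}
    (hs : IsLUB (range fun N => ∑ n ∈ Finset.range N, p n) s) {N n : ℕ} (hNn : N ≤ n) :
    p n ≤ s - ∑ k ∈ Finset.range N, p k := by
  rw [le_sub_iff_add_le]
  calc p n + ∑ k ∈ Finset.range N, p k ≤ p n + ∑ k ∈ Finset.range n, p k :=
        add_le_add_right (Finset.sum_le_sum_of_subset_of_nonneg (Finset.range_mono hNn)
          fun k _ _ => hp k) _
    _ = ∑ k ∈ Finset.range (n + 1), p k := by rw [Finset.sum_range_succ, add_comm]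
    _ ≤ s := hs.1 ⟨n + 1, rfl⟩

end LatticeOrderedGroup

section ConditionallyCompleteLattice

variable {X : Type*} [ConditionallyCompleteLattice X]

noncomputable def tailSup (g : ℕ → X) (N : ℕ) : X :=
  ⨆ n : ℕ, g (N + n)

theorem le_tailSup {g : ℕ → X} (hg : BddAbove (range g)) {N n : ℕ} (h : N ≤ n) :
    g n ≤ tailSup g N := by
  obtain ⟨k, rfl⟩ := Nat.exists_eq_add_of_le h
  exact le_ciSup (hg.mono (range_comp_subset_range _ g)) k

theorem tailSup_le {g : ℕ → X} {N : ℕ} {c : X} (h : ∀ n, N ≤ n → g n ≤ c) : tailSup g N ≤ c :=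
  ciSup_le fun k => h (N + k) (Nat.le_add_right N k)

theorem tailSup_antitone {g : ℕ → X} (hg : BddAbove (range g)) : Antitone (tailSup g) :=
  fun _ _ h => tailSup_le fun _ hn => le_tailSup hg (h.trans hn)

variable [AddCommGroup X]

theorem inf_le_bandProjApply (w z : X) : z ⊓ w ≤ bandProjApply w z := by
  have hbdd : BddAbove (range fun n : ℕ => z ⊓ (n + 1) • w) :=
    ⟨z, forall_mem_range.2 fun n => inf_le_left⟩
  simpa [bandProjApply] using le_ciSup hbdd 0

theorem bandProjApply_nonneg {w z : X} (hw : 0 ≤ w) (hz : 0 ≤ z) : 0 ≤ bandProjApply w z :=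
  (le_inf hz hw).trans (inf_le_bandProjApply w z)

variable [CovariantClass X X (· + ·) (· ≤ ·)]

theorem nonpos_of_forall_nsmul_le {d c : X} (h : ∀ n : ℕ, n • d ≤ c) : d ≤ 0 := by
  have hbdd : BddAbove (range fun n : ℕ => n • d) := ⟨c, forall_mem_range.2 h⟩
  refine nonpos_of_forall_le_sub_of_isLUB (isLUB_ciSup hbdd) fun n => le_sub_iff_add_le.2 ?_
  rw [← succ_nsmul']
  exact le_ciSup hbdd (n + 1)

theorem isLUB_range_inf_nsmul {e u : X} (he : 0 ≤ e)
    (hwu : ∀ z : X, 0 ≤ z → z ⊓ e = 0 → z = 0) (hu : 0 ≤ u) :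
    IsLUB (range fun n : ℕ => u ⊓ n • e) u := by
  set F : ℕ → X := fun n => u ⊓ n • e
  have hbdd : BddAbove (range F) := ⟨u, forall_mem_range.2 fun n => inf_le_left⟩
  set s := ⨆ n, F n
  have hsu : s ≤ u := ciSup_le fun n => inf_le_left
  -- `n • d ≤ u` for every `n` forces `d = 0`, i.e. `u - s` is disjoint from the weak unit `e`.
  set d := (u - s) ⊓ e
  have hd : ∀ n : ℕ, n • d ≤ F n := by
    intro n
    induction n with
    | zero => simp [F, hu]
    | succ n ih =>
      calc (n + 1) • d = n • d + d := succ_nsmul d n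
        _ ≤ F n + (u - F n) ⊓ e :=
            add_le_add ih (inf_le_inf_right e (sub_le_sub_left (le_ciSup hbdd n) u))
        _ = u ⊓ (F n + e) := by rw [add_inf, add_sub_cancel]
        _ ≤ F (n + 1) :=
            inf_le_inf_left u (by rw [succ_nsmul]; exact add_le_add_left inf_le_right e)
  have hd0 : d = 0 := le_antisymm (nonpos_of_forall_nsmul_le fun n => (hd n).trans inf_le_left)
    (le_inf (sub_nonneg.2 hsu) he)
  have hsu' : s = u := (sub_eq_zero.1 (hwu _ (sub_nonneg.2 hsu) hd0)).symm
  exact hsu' ▸ isLUB_ciSup hbdd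

end ConditionallyCompleteLattice

section TUniversallyComplete

variable {X : Type*} [Preorder X] [AddCommMonoid X] [Module ℝ X]

def IsTUniversallyComplete (T : X →ₗ[ℝ] X) : Prop :=
  ∀ y : ℕ → X, (∀ n, 0 ≤ y n) → Monotone y → (∃ b : X, ∀ n, T (y n) ≤ b) →
    ∃ s : X, IsLUB (range y) s

theorem IsTUniversallyComplete.exists_isLUB_sum [AddLeftMono X] {T : X →ₗ[ℝ] X}
    (hT : IsTUniversallyComplete T) {p : ℕ → X} (hp : ∀ n, 0 ≤ p n) {c : X}
    (hc : ∀ N, ∑ n ∈ Finset.range N, T (p n) ≤ c) :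
    ∃ s : X, IsLUB (range fun N => ∑ n ∈ Finset.range N, p n) s :=
  hT _ (fun N => Finset.sum_nonneg fun n _ => hp n)
    (fun _ _ h => Finset.sum_le_sum_of_subset_of_nonneg (Finset.range_mono h) fun n _ _ => hp n)
    ⟨c, fun N => by simpa only [map_sum] using hc N⟩

end TUniversallyComplete

section RealModule

variable {X : Type*} [ConditionallyCompleteLattice X] [AddCommGroup X]
  [CovariantClass X X (· + ·) (· ≤ ·)] [Module ℝ X] [PosSMulMono ℝ X]

theorem nonpos_of_forall_le_smul {b e : X} (h : ∀ ε : ℝ, 0 < ε → b ≤ ε • e) : b ≤ 0 := by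
  refine nonpos_of_forall_nsmul_le (c := e - b) fun n => le_sub_iff_add_le.2 ?_
  have hn : (0 : ℝ) < n + 1 := by positivity
  calc n • b + b = ((n : ℝ) + 1) • b := by
        rw [← Nat.cast_succ, Nat.cast_smul_eq_nsmul, succ_nsmul]
    _ ≤ ((n : ℝ) + 1) • (((n : ℝ) + 1)⁻¹ • e) :=
        smul_le_smul_of_nonneg_left (h _ (inv_pos.2 hn)) hn.le
    _ = e := smul_inv_smul₀ hn.ne' e

theorem nonpos_of_forall_le_nsmul_sub_of_isLUB {S : ℕ → X} {s b : X} (hs : IsLUB (range S) s)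
    (M : ℕ) (h : ∀ N, b ≤ M • (s - S N)) : b ≤ 0 := by
  rcases M.eq_zero_or_pos with rfl | hM
  · simpa using h 0
  have hM' : (0 : ℝ) < M := Nat.cast_pos.2 hM
  have : (M : ℝ)⁻¹ • b ≤ 0 := nonpos_of_forall_le_sub_of_isLUB hs fun N => by
    rw [inv_smul_le_iff_of_pos hM', Nat.cast_smul_eq_nsmul]
    exact h N
  exact (smul_nonpos_iff_nonpos_of_pos_left (inv_pos.2 hM')).1 this

theorem le_smul_inf_of_mem_lowerBounds_tailSup {e u : X} (he : 0 ≤ e)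
    (hwu : ∀ z : X, 0 ≤ z → z ⊓ e = 0 → z = 0) (hu : 0 ≤ u) (a : ℕ → X) {ε : ℝ} (hε : 0 < ε)
    {s : X} (hs : IsLUB (range fun N => ∑ n ∈ Finset.range N,
      bandProjApply ((a n - ε • e) ⊔ 0) e) s)
    {b : X} (hb : b ∈ lowerBounds (range (tailSup fun n => a n ⊓ u))) :
    b ≤ ε • e ⊓ u := by
  set p : ℕ → X := fun n => bandProjApply ((a n - ε • e) ⊔ 0) e
  have hεe : 0 ≤ ε • e := smul_nonneg hε.le he
  have hp : ∀ n, (a n - ε • e)⁺ ⊓ e ≤ p n := fun n => inf_comm e _ ▸ inf_le_bandProjApply _ _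
  have hp0 : ∀ n, 0 ≤ p n := fun n => bandProjApply_nonneg (posPart_nonneg _) he
  have hM : ∀ M : ℕ, b - ε • e ⊓ u ≤ u - u ⊓ M • e := by
    intro M
    rw [← posPart_sub_eq_sub_inf, sub_le_iff_le_add']
    refine sub_nonpos.1 (nonpos_of_forall_le_nsmul_sub_of_isLUB hs M fun N =>
      sub_le_iff_le_add'.2 ((hb ⟨N, rfl⟩).trans (tailSup_le fun n hNn => ?_)))
    calc a n ⊓ u ≤ ε • e ⊓ u + (u - M • e)⁺ + M • ((a n - ε • e)⁺ ⊓ e) :=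
          inf_le_add_posPart_sub_nsmul_add_nsmul_inf (posPart_nonneg _) hεe hu he
            (sub_le_iff_le_add.1 (le_posPart _)) M
      _ ≤ ε • e ⊓ u + (u - M • e)⁺ + M • (s - ∑ k ∈ Finset.range N, p k) :=
          add_le_add_right (nsmul_le_nsmul_right
            ((hp n).trans (le_sub_sum_range_of_isLUB hp0 hs hNn)) M) _
  exact sub_nonpos.1 (nonpos_of_forall_le_sub_of_isLUB (isLUB_range_inf_nsmul he hwu hu) hM)

end RealModule

theorem stmt3_general {X : Type u} [ConditionallyCompleteLattice X] [AddCommGroup X]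
    [CovariantClass X X (· + ·) (· ≤ ·)] [Module ℝ X] [PosSMulMono ℝ X]
    -- weak order unit
    (e : X) (he : 0 < e) (hwu : ∀ z : X, 0 ≤ z → z ⊓ e = 0 → z = 0)
    -- conditional expectation operator with `T e = e`
    (T : X →ₗ[ℝ] X)
    -- `X` is `T`-universally complete
    (hTuniv : ∀ y : ℕ → X, (∀ n, 0 ≤ y n) → Monotone y →
      (∃ b : X, ∀ n, T (y n) ≤ b) → ∃ s : X, IsLUB (Set.range y) s)
    -- a sequence in `X` and a point `x`
    (f : ℕ → X) (x : X)
    -- for every `ε > 0` the partial sums `∑_{n<N} T P_{(|f n − x| − εe)⁺} e` are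
    -- order bounded in `X`
    (hsum : ∀ ε : ℝ, 0 < ε → ∃ b : X, ∀ N : ℕ,
      ∑ n ∈ Finset.range N, T (bandProjApply ((|f n - x| - ε • e) ⊔ 0) e) ≤ b) :
    -- then `(f n)` uo-converges to `x`
    ∀ u : X, 0 ≤ u → OrderConvergesTo (fun n => |f n - x| ⊓ u) (0 : X) := by
  intro u hu
  set g : ℕ → X := fun n => |f n - x| ⊓ u
  have hg0 : ∀ n, 0 ≤ g n := fun n => le_inf (abs_nonneg _) hu
  have hg : BddAbove (range g) := ⟨u, forall_mem_range.2 fun n => inf_le_right⟩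
  have htail : ∀ b ∈ lowerBounds (range (tailSup g)), b ≤ 0 := fun b hb =>
    nonpos_of_forall_le_smul fun ε hε => by
      obtain ⟨c, hc⟩ := hsum ε hε
      obtain ⟨s, hs⟩ := IsTUniversallyComplete.exists_isLUB_sum hTuniv
        (fun n => bandProjApply_nonneg le_sup_right he.le) hc
      exact (le_smul_inf_of_mem_lowerBounds_tailSup he.le hwu hu _ hε hs hb).trans inf_le_left
  refine orderConvergesTo_of_antitone (tailSup_antitone hg) ⟨?_, htail⟩ fun N n hNn => ?_
  · exact forall_mem_range.2 fun N => (hg0 N).trans (le_tailSup hg le_rfl)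
  · rw [sub_zero, abs_of_nonneg (hg0 n)]
    exact le_tailSup hg hNn

theorem stmt3 {X : Type u} [ConditionallyCompleteLattice X] [AddCommGroup X]
    [CovariantClass X X (· + ·) (· ≤ ·)] [Module ℝ X] [PosSMulMono ℝ X]
    -- weak order unit
    (e : X) (he : 0 < e) (hwu : ∀ z : X, 0 ≤ z → z ⊓ e = 0 → z = 0)
    -- conditional expectation operator with `T e = e`
    (T : X →ₗ[ℝ] X)
    (hTpos : ∀ z : X, 0 ≤ z → 0 ≤ T z)
    (hTstrict : ∀ z : X, 0 ≤ z → T z = 0 → z = 0)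
    (hTcont : ∀ S : Set X, S.Nonempty → DirectedOn (· ≥ ·) S → IsGLB S 0 →
      IsGLB (T '' S) 0)
    (hTidem : ∀ z : X, T (T z) = T z)
    (hTe : T e = e)
    -- `X` is `T`-universally complete
    (hTuniv : ∀ y : ℕ → X, (∀ n, 0 ≤ y n) → Monotone y →
      (∃ b : X, ∀ n, T (y n) ≤ b) → ∃ s : X, IsLUB (Set.range y) s)
    -- a sequence in `X` and a point `x`
    (f : ℕ → X) (x : X)
    -- for every `ε > 0` the partial sums `∑_{n<N} T P_{(|f n − x| − εe)⁺} e` are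
    -- order bounded in `X`
    (hsum : ∀ ε : ℝ, 0 < ε → ∃ b : X, ∀ N : ℕ,
      ∑ n ∈ Finset.range N, T (bandProjApply ((|f n - x| - ε • e) ⊔ 0) e) ≤ b) :
    -- then `(f n)` uo-converges to `x`
    ∀ u : X, 0 ≤ u → OrderConvergesTo (fun n => |f n - x| ⊓ u) (0 : X) :=
  stmt3_general e he hwu T hTuniv f x hsum
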